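/- Let m ≥ 2 and j ≥ 1. Then E_j ≤ λ_1 γ_1² + 4 C_2^{2j} · Σ_{i=2}^m λ_i γ_i². (Key intermediate inequality in the proof of Theorem 1: testing the CG optimality property with the residual polynomial of the CG process whose initial error has no component along the first eigenvector, and using that this polynomial lies in [0, 1] on [0, λ_2].) -/

import Mathlib

/-!
Test the infimum with the Chebyshev polynomial of `[λ₂, λₘ]` normalized at the origin,
`q(x) = T_j(φ x) / T_j(φ 0)` with `φ x = (λₘ + λ₂ - 2x)/(λₘ - λ₂)`. On `[λ₂, λₘ]`, `|φ| ≤ 1`, so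
`|q| ≤ 1 / T_j(φ 0) ≤ 2 C₂^j`, since `φ 0 = (C₂ + C₂⁻¹)/2` and `T_j((c + c⁻¹)/2) = (c^j + c⁻ʲ)/2`.
On `[0, λ₂]`, `φ` takes values in `[1, φ 0]` where `T_j ≥ 1` is increasing, so `0 ≤ q ≤ 1`
there: the first eigencomponent is not damped, but not amplified either.
When `λ₂ = λₘ` the polynomial `(1 - x/λ₂)^j` does the job.
-/

open Polynomial Polynomial.Chebyshev Real

namespace Polynomial.Chebyshev

theorem monotoneOn_eval_T_real (n : ℤ) : MonotoneOn (fun x => (T ℝ n).eval x) (Set.Ici 1) := by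
  intro x (hx : 1 ≤ x) y (hy : 1 ≤ y) hxy
  dsimp only
  rw [← cosh_arcosh hx, ← cosh_arcosh hy, T_real_cosh, T_real_cosh, cosh_le_cosh, abs_mul,
    abs_mul, abs_of_nonneg (arcosh_nonneg hx), abs_of_nonneg (arcosh_nonneg hy)]
  gcongr
  exact (arcosh_le_arcosh (by linarith) (by linarith)).2 hxy

theorem eval_T_real_half_add_inv (n : ℕ) {c : ℝ} (hc : 0 < c) :
    (T ℝ n).eval ((c + c⁻¹) / 2) = (c ^ n + (c ^ n)⁻¹) / 2 := by
  have half_add_inv : ∀ t : ℝ, 0 < t → (t + t⁻¹) / 2 = cosh (log t) := fun t ht => by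
    rw [cosh_eq, exp_neg, exp_log ht]
  rw [half_add_inv c hc, T_real_cosh, half_add_inv _ (pow_pos hc n), log_pow, Int.cast_natCast]

end Polynomial.Chebyshev

noncomputable def chebyshevResidual (a b : ℝ) (n : ℕ) : ℝ[X] :=
  C ((T ℝ n).eval ((b + a) / (b - a)))⁻¹ * (T ℝ n).comp (C (b - a)⁻¹ * (C (b + a) - 2 * X))

section chebyshevResidual

variable {a b : ℝ} (n : ℕ)

theorem eval_chebyshevResidual (x : ℝ) :
    (chebyshevResidual a b n).eval x =
      (T ℝ n).eval ((b + a - 2 * x) / (b - a)) / (T ℝ n).eval ((b + a) / (b - a)) := by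
  simp [chebyshevResidual, div_eq_inv_mul, mul_comm]

theorem natDegree_chebyshevResidual_le : (chebyshevResidual a b n).natDegree ≤ n := by
  have affine : (C (b - a)⁻¹ * (C (b + a) - 2 * X)).natDegree ≤ 1 := by
    compute_degree
  calc (chebyshevResidual a b n).natDegree
      ≤ (T ℝ n).natDegree * (C (b - a)⁻¹ * (C (b + a) - 2 * X)).natDegree :=
        (natDegree_C_mul_le _ _).trans natDegree_comp_le
    _ ≤ n * 1 := by rw [natDegree_T]; gcongr; simp
    _ = n := mul_one n

theorem one_le_eval_T_real_add_div_sub (ha : 0 ≤ a) (hab : a < b) :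
    1 ≤ (T ℝ n).eval ((b + a) / (b - a)) :=
  one_le_eval_T_real n ((one_le_div (by linarith)).2 (by linarith))

theorem eval_chebyshevResidual_zero (ha : 0 ≤ a) (hab : a < b) :
    (chebyshevResidual a b n).eval 0 = 1 := by
  rw [eval_chebyshevResidual, mul_zero, sub_zero,
    div_self (zero_lt_one.trans_le (one_le_eval_T_real_add_div_sub n ha hab)).ne']

theorem abs_eval_chebyshevResidual_le_one (hab : a < b) {x : ℝ}
    (hx : x ∈ Set.Icc 0 a) : |(chebyshevResidual a b n).eval x| ≤ 1 := by
  obtain ⟨hx0, hxa⟩ := hx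
  have hba : 0 < b - a := sub_pos.2 hab
  have h1 : 1 ≤ (b + a - 2 * x) / (b - a) := by rw [le_div_iff₀ hba]; linarith
  have hσ : (b + a - 2 * x) / (b - a) ≤ (b + a) / (b - a) := by gcongr; linarith
  have hT1 := one_le_eval_T_real n h1
  have hTσ := monotoneOn_eval_T_real n h1 (h1.trans hσ) hσ
  rw [eval_chebyshevResidual, abs_div, abs_of_pos (by linarith), abs_of_pos (by linarith),
    div_le_one (by linarith)]
  exact hTσ

theorem abs_eval_chebyshevResidual_le (ha : 0 ≤ a) (hab : a < b) {x : ℝ}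
    (hx : x ∈ Set.Icc a b) :
    |(chebyshevResidual a b n).eval x| ≤ ((T ℝ n).eval ((b + a) / (b - a)))⁻¹ := by
  obtain ⟨hax, hxb⟩ := hx
  have hba : 0 < b - a := sub_pos.2 hab
  have harg : |(b + a - 2 * x) / (b - a)| ≤ 1 := by
    rw [abs_div, abs_of_pos hba, div_le_one hba, abs_le]
    constructor <;> linarith
  have hTσ := one_le_eval_T_real_add_div_sub n ha hab
  rw [eval_chebyshevResidual, abs_div, abs_of_pos (zero_lt_one.trans_le hTσ), div_eq_mul_inv]
  exact mul_le_of_le_one_left (inv_nonneg.2 (by linarith)) (abs_eval_T_real_le_one n harg)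

theorem inv_eval_T_real_add_div_sub_le (ha : 0 < a) (hab : a < b) :
    ((T ℝ n).eval ((b + a) / (b - a)))⁻¹ ≤ 2 * ((√(b / a) - 1) / (√(b / a) + 1)) ^ n := by
  set s := √(b / a)
  have hs1 : 1 < s := by
    rw [show (1 : ℝ) = √1 from sqrt_one.symm]
    exact sqrt_lt_sqrt zero_le_one ((one_lt_div ha).2 hab)
  have hb : b = s ^ 2 * a := by
    rw [sq_sqrt (div_nonneg (by linarith) ha.le), div_mul_cancel₀ _ ha.ne']
  set c := (s - 1) / (s + 1)
  have hc : 0 < c := div_pos (by linarith) (by linarith)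
  have hσ : (b + a) / (b - a) = (c + c⁻¹) / 2 := by
    rw [hb]
    simp only [c]
    have hs₁ : s - 1 ≠ 0 := by linarith
    have hs₂ : s + 1 ≠ 0 := by linarith
    have hs₃ : s ^ 2 - 1 ≠ 0 := by nlinarith
    field_simp
    ring
  have hcn : 0 < c ^ n := pow_pos hc n
  rw [hσ, eval_T_real_half_add_inv n hc, inv_le_comm₀ (by positivity) (by positivity), mul_inv]
  linarith

end chebyshevResidual

theorem exists_residual_polynomial_abs_le (n : ℕ) {a b : ℝ} (ha : 0 < a) (hab : a ≤ b) :
    ∃ q : ℝ[X], q.natDegree ≤ n ∧ q.eval 0 = 1 ∧ (∀ x ∈ Set.Icc 0 a, |q.eval x| ≤ 1) ∧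
      ∀ x ∈ Set.Icc a b, |q.eval x| ≤ 2 * ((√(b / a) - 1) / (√(b / a) + 1)) ^ n := by
  rcases hab.lt_or_eq with hab | rfl
  · exact ⟨chebyshevResidual a b n, natDegree_chebyshevResidual_le n,
      eval_chebyshevResidual_zero n ha.le hab,
      fun x hx => abs_eval_chebyshevResidual_le_one n hab hx,
      fun x hx => (abs_eval_chebyshevResidual_le n ha.le hab hx).trans
        (inv_eval_T_real_add_div_sub_le n ha hab)⟩
  · refine ⟨(1 - C a⁻¹ * X) ^ n,
      (natDegree_pow_le_of_le n (m := 1) (by compute_degree)).trans (mul_one n).le, by simp, ?_, ?_⟩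
    · rintro x ⟨hx0, hxa⟩
      have hxa' : a⁻¹ * x ≤ 1 := by rwa [inv_mul_le_iff₀ ha, mul_one]
      rw [eval_pow, abs_pow]
      simp only [eval_sub, eval_one, eval_mul, eval_C, eval_X]
      exact pow_le_one₀ (abs_nonneg _) (abs_le.2 ⟨by linarith, by nlinarith [inv_pos.2 ha]⟩)
    · rintro x ⟨hax, hxa⟩
      obtain rfl := le_antisymm hxa hax
      simp only [eval_pow, eval_sub, eval_one, eval_mul, eval_C, eval_X, inv_mul_cancel₀ ha.ne',
        div_self ha.ne', sqrt_one, sub_self, zero_div, abs_pow, abs_zero]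
      linarith [pow_nonneg (le_refl (0 : ℝ)) n]

lemma mul_sq_mul_le_of_abs_le {w g p c : ℝ} (hw : 0 ≤ w) (hp : |p| ≤ c) :
    w * (g * p) ^ 2 ≤ c ^ 2 * (w * g ^ 2) := by
  have hp2 : p ^ 2 ≤ c ^ 2 := sq_le_sq' (abs_le.1 hp).1 (abs_le.1 hp).2
  calc w * (g * p) ^ 2 = (w * g ^ 2) * p ^ 2 := by ring
    _ ≤ (w * g ^ 2) * c ^ 2 := by gcongr
    _ = c ^ 2 * (w * g ^ 2) := mul_comm _ _

theorem cg_intermediate_bound_first_general (m : ℕ) (hm : 2 ≤ m) (lam gam : ℕ → ℝ)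
    (hpos : ∀ i, 1 ≤ i → i ≤ m → 0 < lam i)
    (hmono : ∀ i k, 1 ≤ i → i ≤ k → k ≤ m → lam i ≤ lam k)
    (j : ℕ) :
    sInf {y : ℝ | ∃ q : Polynomial ℝ, q.natDegree ≤ j ∧ q.eval 0 = 1 ∧
        y = ∑ i ∈ Finset.Icc 1 m, lam i * (gam i * q.eval (lam i)) ^ 2} ≤
      lam 1 * gam 1 ^ 2 +
        4 * ((Real.sqrt (lam m / lam 2) - 1) / (Real.sqrt (lam m / lam 2) + 1)) ^ (2 * j) *
          ∑ i ∈ Finset.Icc 2 m, lam i * gam i ^ 2 := by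
  set C₂ := (√(lam m / lam 2) - 1) / (√(lam m / lam 2) + 1)
  obtain ⟨q, hdeg, hq0, hq_low, hq_high⟩ := exists_residual_polynomial_abs_le j
    (hpos 2 (by omega) hm) (hmono 2 m (by omega) hm le_rfl)
  have hnonneg : ∀ i ∈ Finset.Icc 1 m, 0 ≤ lam i := fun i hi =>
    (hpos i (Finset.mem_Icc.1 hi).1 (Finset.mem_Icc.1 hi).2).le
  have hbdd : BddBelow {y : ℝ | ∃ q : Polynomial ℝ, q.natDegree ≤ j ∧ q.eval 0 = 1 ∧
      y = ∑ i ∈ Finset.Icc 1 m, lam i * (gam i * q.eval (lam i)) ^ 2} :=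
    ⟨0, by rintro _ ⟨p, -, -, rfl⟩; exact Finset.sum_nonneg fun i hi =>
      mul_nonneg (hnonneg i hi) (sq_nonneg _)⟩
  have hfirst := mul_sq_mul_le_of_abs_le (g := gam 1) (hpos 1 le_rfl (by omega)).le
    (hq_low _ ⟨(hpos 1 le_rfl (by omega)).le, hmono 1 2 le_rfl (by omega) hm⟩)
  have hrest : ∑ i ∈ Finset.Icc 2 m, lam i * (gam i * q.eval (lam i)) ^ 2 ≤
      (2 * C₂ ^ j) ^ 2 * ∑ i ∈ Finset.Icc 2 m, lam i * gam i ^ 2 := by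
    rw [Finset.mul_sum]
    refine Finset.sum_le_sum fun i hi => ?_
    obtain ⟨h2i, him⟩ := Finset.mem_Icc.1 hi
    exact mul_sq_mul_le_of_abs_le (hpos i (by omega) him).le
      (hq_high _ ⟨hmono 2 i (by omega) h2i him, hmono i m (by omega) him le_rfl⟩)
  calc _ ≤ ∑ i ∈ Finset.Icc 1 m, lam i * (gam i * q.eval (lam i)) ^ 2 :=
        csInf_le hbdd ⟨q, hdeg, hq0, rfl⟩
    _ = lam 1 * (gam 1 * q.eval (lam 1)) ^ 2 +
        ∑ i ∈ Finset.Icc 2 m, lam i * (gam i * q.eval (lam i)) ^ 2 :=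
        (Finset.add_sum_Ioc_eq_sum_Icc (by omega)).symm
    _ ≤ _ := by
        rw [one_pow, one_mul] at hfirst
        rw [mul_pow, ← pow_mul, mul_comm j] at hrest
        linarith

/-- Key intermediate inequality in the proof of Theorem 1 of the paper:
`E_j ≤ λ₁ γ₁² + 4 C₂^{2j} Σ_{i=2}^m λ_i γ_i²`, where
`E j = sInf { Σ_{i=1}^m λ_i (γ_i q(λ_i))² : q polynomial, deg q ≤ j, q(0) = 1 }` and
`C₂ = (√κ₂ − 1)/(√κ₂ + 1)` with `κ₂ = λ_m / λ₂`. -/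
theorem cg_intermediate_bound_first (m : ℕ) (hm : 2 ≤ m) (lam gam : ℕ → ℝ)
    (hpos : ∀ i, 1 ≤ i → i ≤ m → 0 < lam i)
    (hmono : ∀ i k, 1 ≤ i → i ≤ k → k ≤ m → lam i ≤ lam k)
    (j : ℕ) (hj : 1 ≤ j) :
    sInf {y : ℝ | ∃ q : Polynomial ℝ, q.natDegree ≤ j ∧ q.eval 0 = 1 ∧
        y = ∑ i ∈ Finset.Icc 1 m, lam i * (gam i * q.eval (lam i)) ^ 2} ≤
      lam 1 * gam 1 ^ 2 +
        4 * ((Real.sqrt (lam m / lam 2) - 1) / (Real.sqrt (lam m / lam 2) + 1)) ^ (2 * j) *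
          ∑ i ∈ Finset.Icc 2 m, lam i * gam i ^ 2 :=
  cg_intermediate_bound_first_general m hm lam gam hpos hmono j
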